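/- arXiv:2407.08881 — 4 statements merged into one kernel-verified Lean document; each statement's English description precedes it below -/
import Mathlib

section
/- For every positive integer N, the sum over all divisors d of N of φ(gcd(d, N/d)) is at most 2^{ω(N)} · √N, as real numbers. -/
/-!
The sum `f N = ∑_{d ∣ N} φ(gcd(d, N/d))` is multiplicative: for coprime `m, n` every divisor of
`mn` is uniquely `ab` with `a ∣ m`, `b ∣ n`, and then `gcd(ab, mn/(ab)) = gcd(a, m/a) · gcd(b, n/b)`
with coprime factors. At a prime power the summands are `φ(p^{min(i, k-i)})`, so the sum splits
into two full sums of totients over the divisors of `p^{⌊k/2⌋}` and of `p^{⌊(k-1)/2⌋}`; hence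
`f(p^k) = p^{⌊k/2⌋} + p^{⌊(k-1)/2⌋} ≤ 2 √(p^k)`, and the bound follows by multiplying over `N`'s
prime powers.
-/

open Finset

namespace Nat

theorem Coprime.sum_divisors_mul_eq_sum_sum {M : Type*} [AddCommMonoid M] {m n : ℕ}
    (hmn : m.Coprime n) (f : ℕ → M) :
    ∑ d ∈ (m * n).divisors, f d = ∑ a ∈ m.divisors, ∑ b ∈ n.divisors, f (a * b) := by
  rw [Nat.divisors_mul, Finset.mul_def,
    Finset.sum_image fun x hx y hy h => hmn.mul_injOn_divisors hx hy h, Finset.sum_product]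

theorem Coprime.gcd_mul_mul {a a' b b' : ℕ} (h : (a * a').Coprime (b * b')) :
    (a * b).gcd (a' * b') = a.gcd a' * b.gcd b' := by
  have hab' : a.Coprime b' := h.coprime_dvd_left (Nat.dvd_mul_right a a') |>.coprime_dvd_right
    (Nat.dvd_mul_left b' b)
  have hba' : b.Coprime a' := (h.coprime_dvd_left (Nat.dvd_mul_left a' a) |>.coprime_dvd_right
    (Nat.dvd_mul_right b b')).symm
  have ha'b' : a'.Coprime b' := h.coprime_dvd_left (Nat.dvd_mul_left a' a) |>.coprime_dvd_right
    (Nat.dvd_mul_left b' b)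
  rw [Coprime.gcd_mul _ ha'b', Coprime.gcd_mul_right_cancel a hba',
    Coprime.gcd_mul_left_cancel b hab']

theorem sum_range_totient_prime_pow {p : ℕ} (hp : p.Prime) (n : ℕ) :
    ∑ i ∈ range (n + 1), φ (p ^ i) = p ^ n := by
  rw [← Nat.sum_divisors_prime_pow hp, Nat.sum_totient]

end Nat

theorem Real.pow_le_sqrt_pow {x : ℝ} (hx : 1 ≤ x) {m n : ℕ} (h : 2 * m ≤ n) : x ^ m ≤ √(x ^ n) :=
  (Real.le_sqrt (by positivity) (by positivity)).mpr <| by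
    rw [← pow_mul, mul_comm]
    exact pow_le_pow_right₀ hx h

namespace ArithmeticFunction

def sumTotientGcd : ArithmeticFunction ℕ :=
  ⟨fun n => ∑ d ∈ n.divisors, (d.gcd (n / d)).totient, by simp⟩

theorem sumTotientGcd_apply (n : ℕ) :
    sumTotientGcd n = ∑ d ∈ n.divisors, (d.gcd (n / d)).totient :=
  rfl

theorem isMultiplicative_sumTotientGcd : sumTotientGcd.IsMultiplicative := by
  refine ⟨by simp [sumTotientGcd_apply], fun {m n} hmn => ?_⟩
  simp only [sumTotientGcd_apply, hmn.sum_divisors_mul_eq_sum_sum, Finset.sum_mul_sum]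
  refine Finset.sum_congr rfl fun a ha => Finset.sum_congr rfl fun b hb => ?_
  have ha : a ∣ m := Nat.dvd_of_mem_divisors ha
  have hb : b ∣ n := Nat.dvd_of_mem_divisors hb
  have hsplit : (a * (m / a)).Coprime (b * (n / b)) := by
    rwa [Nat.mul_div_cancel' ha, Nat.mul_div_cancel' hb]
  rw [← Nat.div_mul_div_comm ha hb, hsplit.gcd_mul_mul, Nat.totient_mul]
  exact hsplit.coprime_dvd_left ((Nat.gcd_dvd_left _ _).trans (Nat.dvd_mul_right _ _))
    |>.coprime_dvd_right ((Nat.gcd_dvd_left _ _).trans (Nat.dvd_mul_right _ _))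

theorem sumTotientGcd_prime_pow_succ {p : ℕ} (hp : p.Prime) (k : ℕ) :
    sumTotientGcd (p ^ (k + 1)) = p ^ ((k + 1) / 2) + p ^ (k / 2) := by
  rw [sumTotientGcd_apply, Nat.sum_divisors_prime_pow hp,
    show k + 1 + 1 = ((k + 1) / 2 + 1) + (k / 2 + 1) by omega, Finset.sum_range_add]
  congr 1
  · rw [← Nat.sum_range_totient_prime_pow hp ((k + 1) / 2)]
    refine Finset.sum_congr rfl fun i hi => ?_
    have hi : i ≤ (k + 1) / 2 := Nat.lt_succ_iff.mp (Finset.mem_range.mp hi)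
    rw [Nat.pow_div (by omega) hp.pos, Nat.gcd_eq_left (pow_dvd_pow p (by omega))]
  · rw [← Finset.sum_range_reflect, ← Nat.sum_range_totient_prime_pow hp (k / 2)]
    refine Finset.sum_congr rfl fun j hj => ?_
    have hj : j ≤ k / 2 := Nat.lt_succ_iff.mp (Finset.mem_range.mp hj)
    rw [Nat.pow_div (by omega) hp.pos, Nat.gcd_eq_right (pow_dvd_pow p (by omega))]
    congr 2
    omega

theorem sumTotientGcd_prime_pow_le {p k : ℕ} (hp : p.Prime) (hk : k ≠ 0) :
    (sumTotientGcd (p ^ k) : ℝ) ≤ 2 * √((p : ℝ) ^ k) := by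
  obtain ⟨k, rfl⟩ := Nat.exists_eq_succ_of_ne_zero hk
  have hp1 : (1 : ℝ) ≤ p := by exact_mod_cast hp.one_lt.le
  rw [sumTotientGcd_prime_pow_succ hp, Nat.cast_add, Nat.cast_pow, Nat.cast_pow, two_mul]
  exact add_le_add (Real.pow_le_sqrt_pow hp1 (by omega)) (Real.pow_le_sqrt_pow hp1 (by omega))

theorem IsMultiplicative.le_pow_card_primeFactors_mul_sqrt {f : ArithmeticFunction ℕ}
    (hf : f.IsMultiplicative) {C : ℝ}
    (hC : ∀ p k : ℕ, p.Prime → k ≠ 0 → (f (p ^ k) : ℝ) ≤ C * √((p : ℝ) ^ k))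
    {n : ℕ} (hn : n ≠ 0) :
    (f n : ℝ) ≤ C ^ n.primeFactors.card * √n :=
  calc (f n : ℝ) = ∏ p ∈ n.primeFactors, (f (p ^ n.factorization p) : ℝ) := by
        rw [hf.multiplicative_factorization f hn, Finsupp.prod, Nat.support_factorization,
          Nat.cast_prod]
    _ ≤ ∏ p ∈ n.primeFactors, C * √((p : ℝ) ^ n.factorization p) :=
        Finset.prod_le_prod (fun _ _ => by positivity) fun p hp =>
          hC p _ (Nat.prime_of_mem_primeFactors hp)
            (Finsupp.mem_support_iff.mp (n.support_factorization ▸ hp))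
    _ = C ^ n.primeFactors.card * √n := by
        rw [Finset.prod_mul_distrib, Finset.prod_const,
          ← Real.sqrt_prod _ fun _ _ => by positivity]
        congr 2
        exact_mod_cast (Nat.prod_primeFactors_pow_factorization hn).symm

end ArithmeticFunction

/-- For every positive integer `N`, `∑_{d ∣ N} φ(gcd(d, N/d)) ≤ 2^{ω(N)} · √N`,
as real numbers. -/
theorem sum_totient_gcd_le (N : ℕ) (hN : 0 < N) :
    ((∑ d ∈ N.divisors, (Nat.gcd d (N / d)).totient : ℕ) : ℝ)
      ≤ 2 ^ N.primeFactors.card * Real.sqrt N :=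
  ArithmeticFunction.isMultiplicative_sumTotientGcd.le_pow_card_primeFactors_mul_sqrt
    (fun _ _ hp hk => ArithmeticFunction.sumTotientGcd_prime_pow_le hp hk) hN.ne'
end

section
/- For every positive integer N, ν(N) ≤ 21.234 · N^{1/16}, as real numbers. -/
/-!
`ν(n) ^ 16 / n` is multiplicative, and at a prime power `p ^ k` it is at most `ν(p) ^ 16 / p`,
which is `≤ 1` once `p ≥ 17` because `(17 / 15) ^ 16 < 17`. Hence `ν(N) ^ 16 / N` is bounded by
the product of `max 1 (ν(p) ^ 16 / p)` over the primes `p ≤ 13`, namely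
`(364 / 9) ^ 16 / 30030 ≤ 21.234 ^ 16`.
-/

open ArithmeticFunction Finset

namespace ArithmeticFunction.IsMultiplicative

variable {R : Type*} [CommSemiring R] [PartialOrder R] [IsOrderedRing R]
  {f g : ArithmeticFunction R}

theorem apply_le_prod_mul_apply (hf : f.IsMultiplicative) (hg : g.IsMultiplicative)
    {M : ℕ → R} {B : Finset ℕ}
    (hf0 : ∀ p k, p.Prime → 0 ≤ f (p ^ k)) (hg0 : ∀ p k, p.Prime → 0 ≤ g (p ^ k))
    (hfg : ∀ p k, p.Prime → 0 < k → f (p ^ k) ≤ M p * g (p ^ k))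
    (hM : ∀ p, 1 ≤ M p) (hMB : ∀ p, p.Prime → p ∉ B → M p = 1) {n : ℕ} (hn : n ≠ 0) :
    f n ≤ (∏ p ∈ B, M p) * g n := by
  classical
  have hprime {p} (hp : p ∈ n.primeFactors) : p.Prime := Nat.prime_of_mem_primeFactors hp
  have hpos {p} (hp : p ∈ n.primeFactors) : 0 < n.factorization p :=
    (hprime hp).factorization_pos_of_dvd hn (Nat.dvd_of_mem_primeFactors hp)
  have hMS : ∏ p ∈ n.primeFactors, M p ≤ ∏ p ∈ B, M p :=
    calc ∏ p ∈ n.primeFactors, M p = ∏ p ∈ n.primeFactors ∩ B, M p :=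
          (prod_subset inter_subset_left fun p hS hSB ↦
            hMB p (hprime hS) fun hB ↦ hSB (mem_inter.2 ⟨hS, hB⟩)).symm
      _ ≤ ∏ p ∈ B, M p := prod_le_prod_of_subset_of_one_le inter_subset_right
          (fun p _ ↦ zero_le_one.trans (hM p)) fun p _ _ ↦ hM p
  rw [hf.multiplicative_factorization f hn, hg.multiplicative_factorization g hn]
  calc ∏ p ∈ n.primeFactors, f (p ^ n.factorization p)
      ≤ ∏ p ∈ n.primeFactors, M p * g (p ^ n.factorization p) :=
        prod_le_prod (fun p hp ↦ hf0 p _ (hprime hp)) fun p hp ↦ hfg p _ (hprime hp) (hpos hp)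
    _ = (∏ p ∈ n.primeFactors, M p) * ∏ p ∈ n.primeFactors, g (p ^ n.factorization p) :=
        prod_mul_distrib
    _ ≤ (∏ p ∈ B, M p) * ∏ p ∈ n.primeFactors, g (p ^ n.factorization p) :=
        mul_le_mul_of_nonneg_right hMS (prod_nonneg fun p hp ↦ hg0 p _ (hprime hp))

end ArithmeticFunction.IsMultiplicative

theorem one_add_two_div_sub_two_pow_le {K : Type*} [Field K] [LinearOrder K]
    [IsStrictOrderedRing K] {x : K} (hx : 17 ≤ x) : (1 + 2 / (x - 2)) ^ 16 ≤ x := by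
  have h15 : 15 ≤ x - 2 := by linarith
  have hle : 1 + 2 / (x - 2) ≤ 17 / 15 := by
    have := div_le_div_of_nonneg_left (zero_le_two : (0 : K) ≤ 2) (by norm_num) h15
    linarith
  calc (1 + 2 / (x - 2)) ^ 16 ≤ (17 / 15) ^ 16 :=
        pow_le_pow_left₀ (by positivity) hle 16
    _ ≤ 17 := by norm_num
    _ ≤ x := hx

theorem le_mul_rpow_one_div_of_pow_le {x c y : ℝ} {n : ℕ} (hn : Even n) (hn0 : n ≠ 0)
    (hc : 0 ≤ c) (hy : 0 ≤ y) (h : x ^ n ≤ c ^ n * y) : x ≤ c * y ^ ((1 : ℝ) / n) := by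
  have hroot : (c * y ^ ((1 : ℝ) / n)) ^ n = c ^ n * y := by
    rw [mul_pow, one_div, Real.rpow_inv_natCast_pow hy hn0]
  refine (le_abs_self x).trans ((pow_le_pow_iff_left₀ (abs_nonneg x) (by positivity) hn0).1 ?_)
  rwa [hn.pow_abs, hroot]

/-- The common value `ν(p ^ r)`, `r ≥ 1`, of the function `ν` of the statement. -/
def nuAtPrime (p : ℕ) : ℚ := if p = 2 then 4 else 1 + 2 / ((p : ℚ) - 2)

def nuRatioBound (p : ℕ) : ℚ := max 1 (nuAtPrime p ^ 16 / p)

theorem apply_prime_pow_eq_nuAtPrime {ν : ArithmeticFunction ℚ}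
    (hν2 : ∀ r : ℕ, 1 ≤ r → ν (2 ^ r) = 4)
    (hνp : ∀ p r : ℕ, p.Prime → p ≠ 2 → 1 ≤ r → ν (p ^ r) = 1 + 2 / ((p : ℚ) - 2))
    {p k : ℕ} (hp : p.Prime) (hk : 0 < k) : ν (p ^ k) = nuAtPrime p := by
  unfold nuAtPrime
  split_ifs with h2
  · subst h2; exact hν2 k hk
  · exact hνp p k hp h2 hk

theorem nuAtPrime_pow_le {p k : ℕ} (hp : p.Prime) (hk : 0 < k) :
    nuAtPrime p ^ 16 ≤ nuRatioBound p * (p : ℚ) ^ k := by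
  have hp0 : (0 : ℚ) < p := by exact_mod_cast hp.pos
  calc nuAtPrime p ^ 16 = nuAtPrime p ^ 16 / p * p := (div_mul_cancel₀ _ hp0.ne').symm
    _ ≤ nuRatioBound p * (p : ℚ) ^ k :=
      mul_le_mul (le_max_right _ _) (le_self_pow₀ (by exact_mod_cast hp.one_le) hk.ne')
        hp0.le (zero_le_one.trans (le_max_left _ _))

theorem nuRatioBound_eq_one {p : ℕ} (hp : p.Prime) (hp17 : 17 ≤ p) : nuRatioBound p = 1 := by
  have hp2 : p ≠ 2 := by omega
  have hp0 : (0 : ℚ) < p := by exact_mod_cast hp.pos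
  refine max_eq_left ((div_le_one hp0).2 ?_)
  simpa only [nuAtPrime, if_neg hp2] using
    one_add_two_div_sub_two_pow_le (K := ℚ) (by exact_mod_cast hp17)

theorem prod_nuRatioBound_le : ∏ p ∈ {2, 3, 5, 7, 11, 13}, nuRatioBound p ≤ 21.234 ^ 16 := by
  norm_num [nuRatioBound, nuAtPrime]

theorem Nat.Prime.mem_of_lt_seventeen {p : ℕ} (hp : p.Prime) (h : p < 17) :
    p ∈ ({2, 3, 5, 7, 11, 13} : Finset ℕ) := by
  interval_cases p <;> simp_all +decide

/-- Let `ν` be the multiplicative arithmetic function with `ν(2^r) = 4` and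
`ν(p^r) = 1 + 2/(p-2)` for odd primes `p` (and all `r ≥ 1`). Then for every
positive integer `N`, `ν(N) ≤ 21.234 · N^{1/16}` as real numbers. -/
theorem nu_le (ν : ArithmeticFunction ℚ) (hν : ν.IsMultiplicative)
    (hν2 : ∀ r : ℕ, 1 ≤ r → ν (2 ^ r) = 4)
    (hνp : ∀ p r : ℕ, p.Prime → p ≠ 2 → 1 ≤ r → ν (p ^ r) = 1 + 2 / ((p : ℚ) - 2))
    (N : ℕ) (hN : 0 < N) :
    ((ν N : ℚ) : ℝ) ≤ 21.234 * (N : ℝ) ^ ((1 : ℝ) / 16) := by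
  have hpow : ν N ^ 16 ≤ 21.234 ^ 16 * N := by
    have key := (hν.ppow (k := 16)).apply_le_prod_mul_apply
      (g := ((ArithmeticFunction.id : ArithmeticFunction ℕ) : ArithmeticFunction ℚ))
      isMultiplicative_id.natCast (M := nuRatioBound) (B := {2, 3, 5, 7, 11, 13})
      (fun p k _ ↦ by rw [ppow_apply (by norm_num)]; positivity)
      (fun p k _ ↦ by rw [natCoe_apply]; positivity)
      (fun p k hp hk ↦ by
        rw [ppow_apply (by norm_num), apply_prime_pow_eq_nuAtPrime hν2 hνp hp hk,
          natCoe_apply, id_apply]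
        exact_mod_cast nuAtPrime_pow_le hp hk)
      (fun p ↦ le_max_left _ _)
      (fun p hp hB ↦ nuRatioBound_eq_one hp (not_lt.1 fun h ↦ hB (hp.mem_of_lt_seventeen h)))
      hN.ne'
    rw [ppow_apply (by norm_num), natCoe_apply, id_apply] at key
    exact key.trans (mul_le_mul_of_nonneg_right prod_nuRatioBound_le (Nat.cast_nonneg N))
  have hpowℝ : ((ν N : ℚ) : ℝ) ^ 16 ≤ 21.234 ^ 16 * (N : ℝ) := by
    simpa using (Rat.cast_le (K := ℝ)).2 hpow
  simpa using le_mul_rpow_one_div_of_pow_le (n := 16) (by decide) (by norm_num) (by norm_num)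
    (Nat.cast_nonneg N) hpowℝ
end

section
/- Let β be the multiplicative arithmetic function determined by β(1) = 1 and, for every prime p, β(p) = −2, β(p^2) = 1, and β(p^r) = 0 for r ≥ 3. Let f be a positive integer and define ψ_f(n) := ψ(f·n)/ψ(f), a rational-valued arithmetic function. Then for every prime p: if p does not divide f, then (β * ψ_f)(p) = p − 1, (β * ψ_f)(p^2) = p^2 − p − 1, and (β * ψ_f)(p^r) = p^r − p^{r−1} − p^{r−2} + p^{r−3} for every r ≥ 3; and if p divides f, then (β * ψ_f)(p) = p − 2 and (β * ψ_f)(p^r) = p^r − 2p^{r−1} + p^{r−2} for every r ≥ 2. -/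
/-- The rational-valued arithmetic function `ψ(n) = n · ∏_{p ∣ n} (1 + 1/p)`. -/
noncomputable def psi : ArithmeticFunction ℚ :=
  ⟨fun n => (n : ℚ) * ∏ p ∈ n.primeFactors, (1 + 1 / (p : ℚ)), by simp⟩

/-- Given a positive integer `f`, the arithmetic function `ψ_f(n) := ψ(f·n)/ψ(f)`. -/
noncomputable def psiSub (f : ℕ) : ArithmeticFunction ℚ :=
  ⟨fun n => psi (f * n) / psi f, by simp⟩

/-!
Since `β(1) = 1` and `β(pⁱ) = 0` for `i ≥ 3`, only three terms of the convolution survive: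
`(β * g)(p) = g(p) - 2 g(1)` and `(β * g)(pʳ) = g(pʳ) - 2 g(pʳ⁻¹) + g(pʳ⁻²)` for `r ≥ 2`.
If `p ∤ f`, multiplicativity of `ψ` gives `ψ_f(pᵏ) = ψ(pᵏ) = pᵏ (1 + 1/p)` for `k ≥ 1`; if `p ∣ f`,
multiplying `f` by `pᵏ` adds no new prime factor, so `ψ_f(pᵏ) = pᵏ`. Substituting gives the formulas.
-/

namespace ArithmeticFunction

variable {R : Type*}

theorem mul_apply_prime_pow [Semiring R] (f g : ArithmeticFunction R) {p : ℕ} (hp : p.Prime)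
    (r : ℕ) : (f * g) (p ^ r) = ∑ i ∈ Finset.range (r + 1), f (p ^ i) * g (p ^ (r - i)) := by
  rw [mul_apply, Nat.sum_divisorsAntidiagonal (f · * g ·), Nat.sum_divisors_prime_pow hp]
  refine Finset.sum_congr rfl fun i hi => ?_
  rw [Nat.pow_div (Nat.lt_succ_iff.mp (Finset.mem_range.mp hi)) hp.pos]

theorem mul_apply_prime [Semiring R] (f g : ArithmeticFunction R) {p : ℕ} (hp : p.Prime) :
    (f * g) p = f 1 * g p + f p * g 1 := by
  simpa [Finset.sum_range_succ] using mul_apply_prime_pow f g hp 1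

end ArithmeticFunction

open ArithmeticFunction

section Beta

variable {R : Type*} [CommRing R] {β : ArithmeticFunction R} {p : ℕ}

theorem beta_mul_apply_prime (hp : p.Prime) (h0 : β 1 = 1) (h1 : β p = -2)
    (g : ArithmeticFunction R) : (β * g) p = g p - 2 * g 1 := by
  rw [mul_apply_prime β g hp, h0, h1]
  ring

theorem beta_mul_apply_prime_pow (hp : p.Prime) (h0 : β 1 = 1) (h1 : β p = -2)
    (h2 : β (p ^ 2) = 1) (h3 : ∀ i, 3 ≤ i → β (p ^ i) = 0) (g : ArithmeticFunction R)
    (r : ℕ) (hr : 2 ≤ r) :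
    (β * g) (p ^ r) = g (p ^ r) - 2 * g (p ^ (r - 1)) + g (p ^ (r - 2)) := by
  obtain ⟨s, rfl⟩ := Nat.exists_eq_add_of_le' hr
  have htail : ∑ i ∈ Finset.range s, β (p ^ (i + 1 + 1 + 1)) * g (p ^ (s + 2 - (i + 1 + 1 + 1)))
      = 0 := Finset.sum_eq_zero fun i _ => by rw [h3 _ (by omega), zero_mul]
  rw [mul_apply_prime_pow β g hp, Finset.sum_range_succ', Finset.sum_range_succ',
    Finset.sum_range_succ', htail]
  simp only [zero_add, pow_zero, pow_one, h0, h1, h2, Nat.sub_zero]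
  ring

end Beta

theorem psi_apply (n : ℕ) : psi n = n * ∏ p ∈ n.primeFactors, (1 + 1 / (p : ℚ)) := rfl

theorem psi_pos {n : ℕ} (hn : n ≠ 0) : 0 < psi n := by
  rw [psi_apply]
  exact mul_pos (by positivity) (Finset.prod_pos fun p _ => by positivity)

theorem isMultiplicative_psi : psi.IsMultiplicative := by
  refine IsMultiplicative.iff_ne_zero.mpr ⟨by simp [psi_apply], fun {m n} hm hn hmn => ?_⟩
  rw [psi_apply, psi_apply, psi_apply, Nat.primeFactors_mul hm hn,
    Finset.prod_union hmn.disjoint_primeFactors]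
  push_cast
  ring

theorem psi_apply_prime_pow {p k : ℕ} (hp : p.Prime) (hk : k ≠ 0) :
    psi (p ^ k) = (p : ℚ) ^ k * (1 + 1 / p) := by
  rw [psi_apply, Nat.primeFactors_prime_pow hk hp, Finset.prod_singleton]
  push_cast
  rfl

theorem psi_mul_of_primeFactors_subset {m n : ℕ} (hn : n ≠ 0)
    (h : m.primeFactors ⊆ n.primeFactors) : psi (n * m) = m * psi n := by
  rcases eq_or_ne m 0 with rfl | hm
  · simp
  rw [psi_apply, psi_apply, Nat.primeFactors_mul hn hm, Finset.union_eq_left.mpr h]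
  push_cast
  ring

theorem psiSub_apply_of_coprime {f n : ℕ} (hf : f ≠ 0) (h : f.Coprime n) :
    psiSub f n = psi n := by
  show psi (f * n) / psi f = psi n
  rw [isMultiplicative_psi.map_mul_of_coprime h, mul_div_cancel_left₀ _ (psi_pos hf).ne']

theorem psiSub_apply_of_primeFactors_subset {f n : ℕ} (hf : f ≠ 0)
    (h : n.primeFactors ⊆ f.primeFactors) : psiSub f n = n := by
  show psi (f * n) / psi f = n
  rw [psi_mul_of_primeFactors_subset hf h, mul_div_cancel_right₀ _ (psi_pos hf).ne']

theorem psiSub_apply_prime_pow_of_not_dvd {f p : ℕ} (hf : f ≠ 0) (hp : p.Prime) (hpf : ¬p ∣ f)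
    (k : ℕ) : psiSub f (p ^ k) = psi (p ^ k) :=
  psiSub_apply_of_coprime hf ((hp.coprime_iff_not_dvd.mpr hpf).symm.pow_right k)

theorem psiSub_apply_prime_pow_of_dvd {f p : ℕ} (hf : f ≠ 0) (hpf : p ∣ f) (k : ℕ) :
    psiSub f (p ^ k) = (p : ℚ) ^ k := by
  rw [psiSub_apply_of_primeFactors_subset hf, Nat.cast_pow]
  rcases k with _ | k
  · simp
  · rw [Nat.primeFactors_pow_succ]
    exact Nat.primeFactors_mono hpf hf

/-- Let `β` be the multiplicative arithmetic function with `β(p) = -2`, `β(p^2) = 1`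
and `β(p^r) = 0` for `r ≥ 3`, let `f` be a positive integer, and let
`ψ_f(n) := ψ(f·n)/ψ(f)`. Then for every prime `p`: if `p ∤ f` then
`(β * ψ_f)(p) = p - 1`, `(β * ψ_f)(p²) = p² - p - 1`, and
`(β * ψ_f)(p^r) = p^r - p^{r-1} - p^{r-2} + p^{r-3}` for `r ≥ 3`; and if `p ∣ f` then
`(β * ψ_f)(p) = p - 2` and `(β * ψ_f)(p^r) = p^r - 2p^{r-1} + p^{r-2}` for `r ≥ 2`. -/
theorem beta_mul_psiSub_apply (β : ArithmeticFunction ℚ)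
    (hβ : β.IsMultiplicative)
    (hβ1 : ∀ p : ℕ, p.Prime → β p = -2)
    (hβ2 : ∀ p : ℕ, p.Prime → β (p ^ 2) = 1)
    (hβ3 : ∀ p r : ℕ, p.Prime → 3 ≤ r → β (p ^ r) = 0)
    (f : ℕ) (hf : 0 < f) :
    ∀ p : ℕ, p.Prime →
      (¬ p ∣ f →
        (β * psiSub f) p = (p : ℚ) - 1 ∧
        (β * psiSub f) (p ^ 2) = (p : ℚ) ^ 2 - (p : ℚ) - 1 ∧
        ∀ r : ℕ, 3 ≤ r →
          (β * psiSub f) (p ^ r)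
            = (p : ℚ) ^ r - (p : ℚ) ^ (r - 1) - (p : ℚ) ^ (r - 2) + (p : ℚ) ^ (r - 3)) ∧
      (p ∣ f →
        (β * psiSub f) p = (p : ℚ) - 2 ∧
        ∀ r : ℕ, 2 ≤ r →
          (β * psiSub f) (p ^ r)
            = (p : ℚ) ^ r - 2 * (p : ℚ) ^ (r - 1) + (p : ℚ) ^ (r - 2)) := by
  intro p hp
  have hprime := beta_mul_apply_prime hp hβ.map_one (hβ1 p hp) (psiSub f)
  have hpow := beta_mul_apply_prime_pow hp hβ.map_one (hβ1 p hp) (hβ2 p hp)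
    (fun i => hβ3 p i hp) (psiSub f)
  refine ⟨fun hpf => ?_, fun hpf => ?_⟩
  · have hp0 : (p : ℚ) ≠ 0 := by exact_mod_cast hp.ne_zero
    have hψ := psiSub_apply_prime_pow_of_not_dvd hf.ne' hp hpf
    have hψp : psiSub f p = p * (1 + 1 / p) := by
      simpa using (hψ 1).trans (psi_apply_prime_pow hp one_ne_zero)
    have hψ1 : psiSub f 1 = 1 := by simpa [isMultiplicative_psi.map_one] using hψ 0
    refine ⟨?_, ?_, fun r hr => ?_⟩
    · rw [hprime, hψp, hψ1]
      field_simp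
      ring
    · rw [hpow 2 le_rfl, hψ, psi_apply_prime_pow hp two_ne_zero]
      simp only [Nat.add_one_sub_one, Nat.sub_self, pow_one, pow_zero, hψp, hψ1]
      field_simp
      ring
    · obtain ⟨s, rfl⟩ := Nat.exists_eq_add_of_le' hr
      rw [hpow _ (by omega), hψ, hψ, hψ, psi_apply_prime_pow hp (by omega),
        psi_apply_prime_pow hp (by omega), psi_apply_prime_pow hp (by omega)]
      simp only [show s + 3 - 1 = s + 2 by omega, show s + 3 - 2 = s + 1 by omega,
        Nat.add_sub_cancel]
      field_simp
      ring
  · have hψ := psiSub_apply_prime_pow_of_dvd hf.ne' hpf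
    refine ⟨?_, fun r hr => ?_⟩
    · have hψp : psiSub f p = p := by simpa using hψ 1
      have hψ1 : psiSub f 1 = 1 := by simpa using hψ 0
      rw [hprime, hψp, hψ1]
      ring
    · rw [hpow r hr, hψ, hψ, hψ]
end

section
/- Fix a prime p and an integer α ≥ 1. For s ≥ α let T(s) denote the sum, over all divisors d of p^s such that gcd(d, p^s/d) divides p^{s−α}, of φ(gcd(d, p^s/d)), and define the rational numbers h(0) = 1 and h(r) = T(r+α)/2 for r ≥ 1. Then: h(1) − 2 = (p−3)/2 if α = 1, and h(1) − 2 = p − 2 if α ≥ 2. Moreover, for every r ≥ 2, the quantity h(r) − 2h(r−1) + h(r−2) equals: 0 if r ≥ α+1 and r+α is odd; (p^{(r+α)/2} − 2p^{(r+α)/2 − 1} + p^{(r+α)/2 − 2})/2 if r ≥ α+2 and r+α is even; (p^r − 3p^{r−1} + 2p^{r−2})/2 if r = α; and p^r − 2p^{r−1} + p^{r−2} if r < α. -/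
/-- For `s ≥ α`, `T(s)` is the sum over divisors `d` of `p^s` with
`gcd(d, p^s/d) ∣ p^{s-α}` of `φ(gcd(d, p^s/d))`. -/
def T (p α s : ℕ) : ℕ :=
  ∑ d ∈ (p ^ s).divisors.filter (fun d => Nat.gcd d (p ^ s / d) ∣ p ^ (s - α)),
    (Nat.gcd d (p ^ s / d)).totient

/-- `h(0) = 1` and `h(r) = T(r+α)/2` for `r ≥ 1`. -/
def h (p α : ℕ) : ℕ → ℚ := fun r => if r = 0 then 1 else (T p α (r + α) : ℚ) / 2

/-!
Writing `d = p^i`, the summand of `T(s)` depends only on `j = min(i, s - i)`: it is `φ(p^j)` when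
`j ≤ s - α` and `0` otherwise. Each `j` occurs once for `i ≤ s/2` and once for `i > s/2`,
and the totients of `1, p, …, p^m` add up to `p^m`, so for `s ≥ 1`
`T(s) = p^{min(⌊s/2⌋, s-α)} + p^{min(⌊(s-1)/2⌋, s-α)}`.
Hence `h(r) = p^r` for `r < α`, while for `r ≥ α - 1` the value `h(r)` is `p^k` if
`r + α = 2k + 1` and `(p^{k+1} + p^k)/2` if `r + α = 2k + 2`; the second differences follow
by direct computation.
-/

open Finset

theorem sum_range_succ_comp_min_sub {M : Type*} [AddCommMonoid M] (g : ℕ → M) {s : ℕ}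
    (hs : 0 < s) :
    ∑ i ∈ range (s + 1), g (min i (s - i)) =
      ∑ i ∈ range (s / 2 + 1), g i + ∑ i ∈ range ((s - 1) / 2 + 1), g i := by
  rw [show s + 1 = (s / 2 + 1) + ((s - 1) / 2 + 1) by omega, sum_range_add]
  congr 1
  · refine sum_congr rfl fun i hi => ?_
    rw [mem_range] at hi
    rw [min_eq_left (by omega)]
  · rw [← sum_range_reflect]
    refine sum_congr rfl fun i hi => ?_
    rw [mem_range] at hi
    congr 1
    omega

theorem sum_range_succ_ite_le {M : Type*} [AddCommMonoid M] (g : ℕ → M) (m t : ℕ) :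
    ∑ i ∈ range (m + 1), (if i ≤ t then g i else 0) = ∑ i ∈ range (min m t + 1), g i := by
  rw [← sum_filter]
  congr 1
  ext i
  simp only [mem_filter, mem_range]
  omega

theorem Nat.sum_range_totient_prime_pow_s15 {p : ℕ} (hp : p.Prime) (n : ℕ) :
    ∑ i ∈ range (n + 1), (p ^ i).totient = p ^ n := by
  rw [← Nat.sum_divisors_prime_pow hp, Nat.sum_totient]

theorem Nat.gcd_pow_pow (p i j : ℕ) : Nat.gcd (p ^ i) (p ^ j) = p ^ min i j := by
  rcases le_total i j with hij | hij
  · rw [min_eq_left hij, Nat.gcd_eq_left (pow_dvd_pow p hij)]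
  · rw [min_eq_right hij, Nat.gcd_eq_right (pow_dvd_pow p hij)]

theorem T_eq_sum_range {p : ℕ} (hp : p.Prime) (α s : ℕ) :
    T p α s = ∑ i ∈ range (s + 1),
      (if min i (s - i) ≤ s - α then (p ^ min i (s - i)).totient else 0) := by
  rw [T, sum_filter, Nat.sum_divisors_prime_pow hp]
  refine sum_congr rfl fun i hi => ?_
  rw [mem_range] at hi
  rw [Nat.pow_div (by omega) hp.pos, Nat.gcd_pow_pow]
  simp only [Nat.pow_dvd_pow_iff_le_right hp.one_lt]

theorem T_eq {p : ℕ} (hp : p.Prime) (α : ℕ) {s : ℕ} (hs : 0 < s) :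
    T p α s = p ^ min (s / 2) (s - α) + p ^ min ((s - 1) / 2) (s - α) := by
  rw [T_eq_sum_range hp,
    sum_range_succ_comp_min_sub (fun j => if j ≤ s - α then (p ^ j).totient else 0) hs,
    sum_range_succ_ite_le, sum_range_succ_ite_le, Nat.sum_range_totient_prime_pow_s15 hp,
    Nat.sum_range_totient_prime_pow_s15 hp]

theorem h_eq {p : ℕ} (hp : p.Prime) (α r : ℕ) :
    h p α r = ((p : ℚ) ^ min ((r + α) / 2) r + (p : ℚ) ^ min ((r + α - 1) / 2) r) / 2 := by
  rcases Nat.eq_zero_or_pos r with rfl | hr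
  · simp [h]
  · rw [h, if_neg hr.ne', T_eq hp α (by omega), Nat.add_sub_cancel]
    push_cast
    rfl

theorem h_of_lt {p α r : ℕ} (hp : p.Prime) (hr : r < α) : h p α r = (p : ℚ) ^ r := by
  rw [h_eq hp, min_eq_right (by omega), min_eq_right (by omega)]
  ring

theorem h_of_eq_two_mul_add_one {p α r k : ℕ} (hp : p.Prime) (hr : α ≤ r + 1)
    (hk : r + α = 2 * k + 1) : h p α r = (p : ℚ) ^ k := by
  rw [h_eq hp, min_eq_left (by omega), min_eq_left (by omega), hk,
    show (2 * k + 1) / 2 = k by omega, show (2 * k + 1 - 1) / 2 = k by omega]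
  ring

theorem h_of_eq_two_mul_add_two {p α r k : ℕ} (hp : p.Prime) (hr : α ≤ r + 1)
    (hk : r + α = 2 * k + 2) : h p α r = ((p : ℚ) ^ (k + 1) + (p : ℚ) ^ k) / 2 := by
  rw [h_eq hp, min_eq_left (by omega), min_eq_left (by omega), hk,
    show (2 * k + 2) / 2 = k + 1 by omega, show (2 * k + 2 - 1) / 2 = k by omega]

/-- Fix a prime `p` and an integer `α ≥ 1`, and let `T`, `h` be as above. Then
`h(1) - 2 = (p-3)/2` if `α = 1`, and `h(1) - 2 = p - 2` if `α ≥ 2`. Moreover, for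
every `r ≥ 2`, `h(r) - 2h(r-1) + h(r-2)` equals: `0` if `r ≥ α+1` and `r+α` is odd;
`(p^{(r+α)/2} - 2p^{(r+α)/2-1} + p^{(r+α)/2-2})/2` if `r ≥ α+2` and `r+α` is even;
`(p^r - 3p^{r-1} + 2p^{r-2})/2` if `r = α`; and `p^r - 2p^{r-1} + p^{r-2}` if
`r < α`. -/
theorem beta_mul_sigmaSub_apply (p α : ℕ) (hp : p.Prime) (hα : 1 ≤ α) :
    ((α = 1 → h p α 1 - 2 = ((p : ℚ) - 3) / 2) ∧
     (2 ≤ α → h p α 1 - 2 = (p : ℚ) - 2)) ∧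
    (∀ r : ℕ, 2 ≤ r →
      (α + 1 ≤ r → Odd (r + α) → h p α r - 2 * h p α (r - 1) + h p α (r - 2) = 0) ∧
      (α + 2 ≤ r → Even (r + α) →
        h p α r - 2 * h p α (r - 1) + h p α (r - 2)
          = ((p : ℚ) ^ ((r + α) / 2) - 2 * (p : ℚ) ^ ((r + α) / 2 - 1)
              + (p : ℚ) ^ ((r + α) / 2 - 2)) / 2) ∧
      (r = α →
        h p α r - 2 * h p α (r - 1) + h p α (r - 2)
          = ((p : ℚ) ^ r - 3 * (p : ℚ) ^ (r - 1) + 2 * (p : ℚ) ^ (r - 2)) / 2) ∧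
      (r < α →
        h p α r - 2 * h p α (r - 1) + h p α (r - 2)
          = (p : ℚ) ^ r - 2 * (p : ℚ) ^ (r - 1) + (p : ℚ) ^ (r - 2))) := by
  refine ⟨⟨fun hα1 => ?_, fun hα2 => ?_⟩,
    fun r hr => ⟨fun hαr hodd => ?_, fun hαr heven => ?_, fun hrα => ?_, fun hrα => ?_⟩⟩
  · rw [h_of_eq_two_mul_add_two hp (k := 0) (by omega) (by omega)]
    ring
  · rw [h_of_lt hp (by omega)]
    ring
  · obtain ⟨k, hk⟩ : ∃ k, r + α = 2 * k + 3 := by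
      obtain ⟨k, hk⟩ := hodd
      exact ⟨k - 1, by omega⟩
    rw [h_of_eq_two_mul_add_one hp (k := k + 1) (by omega) (by omega),
      h_of_eq_two_mul_add_two hp (k := k) (by omega) (by omega),
      h_of_eq_two_mul_add_one hp (k := k) (by omega) (by omega)]
    ring
  · obtain ⟨k, hk⟩ : ∃ k, r + α = 2 * k + 4 := by
      obtain ⟨k, hk⟩ := heven
      exact ⟨k - 2, by omega⟩
    rw [h_of_eq_two_mul_add_two hp (k := k + 1) (by omega) (by omega),
      h_of_eq_two_mul_add_one hp (k := k + 1) (by omega) (by omega),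
      h_of_eq_two_mul_add_two hp (k := k) (by omega) (by omega),
      hk, show (2 * k + 4) / 2 = k + 2 by omega, show k + 2 - 1 = k + 1 by omega,
      Nat.add_sub_cancel]
    ring
  · obtain ⟨k, rfl⟩ : ∃ k, r = k + 2 := ⟨r - 2, by omega⟩
    rw [h_of_eq_two_mul_add_two hp (k := k + 1) (by omega) (by omega),
      h_of_lt hp (by omega), h_of_lt hp (by omega)]
    rw [show k + 2 - 1 = k + 1 by omega, Nat.add_sub_cancel]
    ring
  · rw [h_of_lt hp hrα, h_of_lt hp (by omega), h_of_lt hp (by omega)]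
end
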